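/- arXiv:0909.2622 — 2 statements merged into one kernel-verified Lean document; each statement's English description precedes it below -/
import Mathlib

section
/- Assume the Hermitian matrix H_R†H_R − H_E†H_E has a positive eigenvalue. If Q° ∈ Ω is a global maximizer of the secrecy rate, i.e. C_s(Q°) ≥ C_s(Q) for all Q ∈ Ω, then Q° satisfies the two equations Q° Θ(Q°) = Tr(Q° Θ(Q°)) · Q° and λ_max(Θ(Q°)) = Tr(Q° Θ(Q°)). -/
/-!
Perturbing the maximiser `Q°` towards any `Q ∈ Ω` along the segment `Q° + t (Q - Q°)` and using
`d/dt log det (M + t E) = Re tr (M⁻¹ E)` at `t = 0` gives the first-order condition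
`Re tr (Θ Q) ≤ Re tr (Θ Q°) =: μ` for all `Q ∈ Ω`. Testing it on the rank-one states `x xᴴ / ‖x‖²`
shows `μ I - Θ ⪰ 0`. Then `tr (Q° (μ I - Θ)) = 0` with both factors positive semidefinite forces
`Q° (μ I - Θ) = 0`, i.e. `Q° Θ = μ Q°`; and since `Q° ≠ 0`, the matrix `μ I - Θ` is singular, so `μ`
is an eigenvalue of `Θ` dominating all the others.
-/

open Matrix
open scoped ComplexOrder

/-- The largest eigenvalue of a (Hermitian) complex matrix, expressed as the
supremum of its real eigenvalues. -/
noncomputable def lamMax {n : ℕ} (A : Matrix (Fin n) (Fin n) ℂ) : ℝ :=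
  sSup {t : ℝ | ∃ v : Fin n → ℂ, v ≠ 0 ∧ A *ᵥ v = (t : ℂ) • v}

open Polynomial

lemma IsMaxOn.hasDerivAt_nonpos {g : ℝ → ℝ} {g' : ℝ} (hmax : IsMaxOn g (Set.Icc 0 1) 0)
    (hg : HasDerivAt g g' 0) : g' ≤ 0 := by
  have hseg : segment ℝ (0 : ℝ) (0 + 1) ⊆ Set.Icc 0 1 := by simp [segment_eq_Icc]
  simpa using hmax.localize.hasFDerivWithinAt_nonpos hg.hasFDerivAt.hasFDerivWithinAt
    (mem_posTangentConeAt_of_segment_subset hseg)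

section

variable {n : Type*} [Fintype n]

lemma Matrix.IsHermitian.ofReal_re_trace_mul {A B : Matrix n n ℂ} (hA : A.IsHermitian)
    (hB : B.IsHermitian) : (((A * B).trace.re : ℝ) : ℂ) = (A * B).trace := by
  refine Complex.conj_eq_iff_re.mp ?_
  rw [← Complex.star_def, ← trace_conjTranspose, conjTranspose_mul, hA.eq, hB.eq, trace_mul_comm]

lemma trace_mul_vecMulVec {R : Type*} [CommSemiring R] (A : Matrix n n R) (x y : n → R) :
    (A * vecMulVec x y).trace = y ⬝ᵥ A *ᵥ x := by
  rw [mul_vecMulVec, trace_vecMulVec, dotProduct_comm]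

variable [DecidableEq n]

lemma eval_det_one_add_X_smul {R : Type*} [CommRing R] (B : Matrix n n R) (r : R) :
    (det (1 + (X : R[X]) • B.map C)).eval r = det (1 + r • B) := by
  simp [eval_det, ← smul_eq_mul_diagonal]

lemma hasDerivAt_det_one_add_smul (B : Matrix n n ℂ) :
    HasDerivAt (fun t : ℝ => (1 + (t : ℂ) • B).det) B.trace 0 := by
  have h := ((det (1 + (X : ℂ[X]) • B.map C)).hasDerivAt (0 : ℝ)).comp_ofReal
  simpa [eval_det_one_add_X_smul, derivative_det_one_add_X_smul] using h

lemma hasDerivAt_log_re_det_add_smul {M : Matrix n n ℂ} (hM : 0 < M.det) (E : Matrix n n ℂ) :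
    HasDerivAt (fun t : ℝ => Real.log (M + (t : ℂ) • E).det.re) (M⁻¹ * E).trace.re 0 := by
  obtain ⟨hre, him⟩ := Complex.pos_iff.mp hM
  have hMre : M.det = (M.det.re : ℂ) := Complex.ext rfl (by simp [him])
  have hfac : ∀ t : ℝ,
      (M + (t : ℂ) • E).det.re = M.det.re * (1 + (t : ℂ) • (M⁻¹ * E)).det.re := by
    intro t
    rw [← Complex.re_ofReal_mul, ← hMre, ← det_mul, Matrix.mul_add, Matrix.mul_one,
      Matrix.mul_smul, ← Matrix.mul_assoc, mul_nonsing_inv _ hM.ne'.isUnit, Matrix.one_mul]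
  have hre_det : HasDerivAt (fun t : ℝ => (1 + (t : ℂ) • (M⁻¹ * E)).det.re)
      (M⁻¹ * E).trace.re 0 :=
    Complex.reCLM.hasFDerivAt.comp_hasDerivAt 0 (hasDerivAt_det_one_add_smul _)
  have hlog := (hre_det.const_mul M.det.re).log (by simp [hre.ne'])
  simp only [hfac]
  convert hlog using 1
  simp [hre.ne']

lemma hasDerivAt_log_re_det_one_add_mul {Q S : Matrix n n ℂ} (hQS : 0 < (1 + Q * S).det)
    (D : Matrix n n ℂ) :
    HasDerivAt (fun t : ℝ => Real.log (1 + (Q + (t : ℂ) • D) * S).det.re)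
      (S * (1 + Q * S)⁻¹ * D).trace.re 0 := by
  convert hasDerivAt_log_re_det_add_smul hQS (D * S) using 1
  · ext t
    rw [Matrix.add_mul, Matrix.smul_mul, add_assoc]
  · rw [← Matrix.mul_assoc, trace_mul_cycle _ D S]

open scoped MatrixOrder in
lemma Matrix.PosSemidef.exists_eq_conjTranspose_mul_self {A : Matrix n n ℂ}
    (hA : A.PosSemidef) : ∃ B : Matrix n n ℂ, A = Bᴴ * B :=
  CStarAlgebra.nonneg_iff_eq_star_mul_self.mp hA.nonneg

lemma det_one_add_mul_pos {Q S : Matrix n n ℂ} (hQ : Q.PosSemidef) (hS : S.PosSemidef) :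
    0 < (1 + Q * S).det := by
  obtain ⟨B, rfl⟩ := hS.exists_eq_conjTranspose_mul_self
  rw [← Matrix.mul_assoc, det_one_add_mul_comm]
  simpa [Matrix.mul_assoc] using
    (PosDef.one.add_posSemidef (hQ.mul_mul_conjTranspose_same B)).det_pos

lemma Matrix.PosSemidef.mul_eq_zero_of_trace_mul_eq_zero {P A : Matrix n n ℂ}
    (hP : P.PosSemidef) (hA : A.PosSemidef) (h : (P * A).trace = 0) : P * A = 0 := by
  obtain ⟨B, rfl⟩ := hP.exists_eq_conjTranspose_mul_self
  obtain ⟨C, rfl⟩ := hA.exists_eq_conjTranspose_mul_self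
  -- `tr (Bᴴ B Cᴴ C)` is the squared Frobenius norm of `B Cᴴ`
  have hBC : B * Cᴴ = 0 := by
    rw [← trace_mul_conjTranspose_self_eq_zero_iff, conjTranspose_mul,
      conjTranspose_conjTranspose, ← h, ← Matrix.mul_assoc, trace_mul_comm]
    simp only [Matrix.mul_assoc]
  rw [Matrix.mul_assoc, ← Matrix.mul_assoc B, hBC, Matrix.zero_mul, Matrix.mul_zero]

lemma Matrix.IsHermitian.mul_inv_one_add_mul {Q S : Matrix n n ℂ} (hS : S.IsHermitian)
    (hQ : Q.IsHermitian) (hu : IsUnit (1 + Q * S).det) : (S * (1 + Q * S)⁻¹).IsHermitian := by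
  have hu' : IsUnit (1 + S * Q).det := by rwa [det_one_add_mul_comm]
  have hpush : (1 + S * Q) * S = S * (1 + Q * S) := by
    simp only [Matrix.add_mul, Matrix.mul_add, Matrix.one_mul, Matrix.mul_one, Matrix.mul_assoc]
  have hswap : (1 + S * Q)⁻¹ * S = S * (1 + Q * S)⁻¹ := calc
    (1 + S * Q)⁻¹ * S = (1 + S * Q)⁻¹ * S * ((1 + Q * S) * (1 + Q * S)⁻¹) := by
        rw [mul_nonsing_inv _ hu, Matrix.mul_one]
    _ = (1 + S * Q)⁻¹ * ((1 + S * Q) * S) * (1 + Q * S)⁻¹ := by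
        rw [hpush]; simp only [Matrix.mul_assoc]
    _ = S * (1 + Q * S)⁻¹ := by rw [← Matrix.mul_assoc, nonsing_inv_mul _ hu', Matrix.one_mul]
  rw [IsHermitian, conjTranspose_mul, conjTranspose_nonsing_inv, conjTranspose_add,
    conjTranspose_one, conjTranspose_mul, hQ.eq, hS.eq, hswap]

lemma posSemidef_smul_one_sub_of_re_trace_mul_le {A : Matrix n n ℂ} (hA : A.IsHermitian) {μ : ℝ}
    (h : ∀ Q : Matrix n n ℂ, Q.PosSemidef → Q.trace = 1 → (A * Q).trace.re ≤ μ) :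
    ((μ : ℂ) • 1 - A).PosSemidef := by
  have hherm : ((μ : ℂ) • 1 - A).IsHermitian := by
    simpa [IsHermitian, conjTranspose_sub, conjTranspose_smul] using hA.eq
  refine PosSemidef.of_dotProduct_mulVec_nonneg hherm fun x => ?_
  rcases eq_or_ne x 0 with rfl | hx
  · simp
  obtain ⟨hc, hcim⟩ := Complex.pos_iff.mp (dotProduct_star_self_pos_iff.mpr hx)
  set c := (star x ⬝ᵥ x).re
  have hxx : star x ⬝ᵥ x = (c : ℂ) := Complex.ext rfl (by simp [hcim])
  have hQ : (((c⁻¹ : ℝ) : ℂ) • vecMulVec x (star x)).PosSemidef :=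
    (posSemidef_vecMulVec_self_star x).smul (Complex.zero_le_real.mpr (inv_nonneg.mpr hc.le))
  have hQtr : (((c⁻¹ : ℝ) : ℂ) • vecMulVec x (star x)).trace = 1 := by
    rw [trace_smul, trace_vecMulVec, dotProduct_comm, hxx, smul_eq_mul, ← Complex.ofReal_mul,
      inv_mul_cancel₀ hc.ne', Complex.ofReal_one]
  have hrayleigh := h _ hQ hQtr
  rw [Matrix.mul_smul, trace_smul, trace_mul_vecMulVec, smul_eq_mul, Complex.re_ofReal_mul,
    inv_mul_le_iff₀ hc] at hrayleigh
  have him : (star x ⬝ᵥ A *ᵥ x).im = 0 := hA.im_star_dotProduct_mulVec_self x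
  rw [sub_mulVec, smul_mulVec, one_mulVec, dotProduct_sub, dotProduct_smul, hxx,
    Complex.nonneg_iff]
  constructor
  · simp only [smul_eq_mul, Complex.sub_re, Complex.re_ofReal_mul, Complex.ofReal_re]
    linarith
  · simp [him]

lemma det_one_add_smul_mul_mul_comm {R m : Type*} [CommRing R] [Fintype m] [DecidableEq m]
    (H : Matrix m n R) (Q : Matrix n n R) (K : Matrix n m R) (c : R) :
    (1 + c • (H * Q * K)).det = (1 + Q * (c • (K * H))).det := by
  rw [Matrix.mul_assoc, ← Matrix.mul_smul, det_one_add_mul_comm, Matrix.smul_mul,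
    Matrix.mul_assoc, Matrix.mul_smul]

/-- `C_s(Q)` written through `S_R`, `S_E` by `det (I + ρ H Q Hᴴ) = det (I + Q (ρ Hᴴ H))`. -/
noncomputable def secrecyRate (SR SE Q : Matrix n n ℂ) : ℝ :=
  Real.log (1 + Q * SR).det.re - Real.log (1 + Q * SE).det.re

noncomputable def secrecyGradient (SR SE Q : Matrix n n ℂ) : Matrix n n ℂ :=
  SR * (1 + Q * SR)⁻¹ - SE * (1 + Q * SE)⁻¹

variable {SR SE : Matrix n n ℂ}

lemma isHermitian_secrecyGradient (hSR : SR.PosSemidef) (hSE : SE.PosSemidef) {Q : Matrix n n ℂ}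
    (hQ : Q.PosSemidef) : (secrecyGradient SR SE Q).IsHermitian :=
  (hSR.isHermitian.mul_inv_one_add_mul hQ.isHermitian (det_one_add_mul_pos hQ hSR).ne'.isUnit).sub
    (hSE.isHermitian.mul_inv_one_add_mul hQ.isHermitian (det_one_add_mul_pos hQ hSE).ne'.isUnit)

lemma hasDerivAt_secrecyRate (hSR : SR.PosSemidef) (hSE : SE.PosSemidef) {Q : Matrix n n ℂ}
    (hQ : Q.PosSemidef) (D : Matrix n n ℂ) :
    HasDerivAt (fun t : ℝ => secrecyRate SR SE (Q + (t : ℂ) • D))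
      (secrecyGradient SR SE Q * D).trace.re 0 := by
  have h := (hasDerivAt_log_re_det_one_add_mul (det_one_add_mul_pos hQ hSR) D).sub
    (hasDerivAt_log_re_det_one_add_mul (det_one_add_mul_pos hQ hSE) D)
  rwa [← Complex.sub_re, ← trace_sub, ← Matrix.sub_mul] at h

lemma re_trace_secrecyGradient_mul_le (hSR : SR.PosSemidef) (hSE : SE.PosSemidef)
    {Q₀ : Matrix n n ℂ} (hQ₀ : Q₀.PosSemidef) (hQ₀tr : Q₀.trace = 1)
    (hmax : ∀ Q : Matrix n n ℂ, Q.PosSemidef → Q.trace = 1 →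
      secrecyRate SR SE Q ≤ secrecyRate SR SE Q₀)
    {Q : Matrix n n ℂ} (hQ : Q.PosSemidef) (hQtr : Q.trace = 1) :
    (secrecyGradient SR SE Q₀ * Q).trace.re ≤ (secrecyGradient SR SE Q₀ * Q₀).trace.re := by
  have hsegment : IsMaxOn (fun t : ℝ => secrecyRate SR SE (Q₀ + (t : ℂ) • (Q - Q₀)))
      (Set.Icc 0 1) 0 := by
    rintro t ⟨ht0, ht1⟩
    have hconv : Q₀ + (t : ℂ) • (Q - Q₀) = ((1 - t : ℝ) : ℂ) • Q₀ + (t : ℂ) • Q := by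
      push_cast; module
    simp only [Set.mem_ofPred_eq, Complex.ofReal_zero, zero_smul, add_zero, hconv]
    refine hmax _ ((hQ₀.smul ?_).add (hQ.smul ?_)) ?_
    · exact Complex.zero_le_real.mpr (by linarith)
    · exact Complex.zero_le_real.mpr ht0
    · simp [trace_add, trace_smul, hQ₀tr, hQtr]
  have h := hsegment.hasDerivAt_nonpos (hasDerivAt_secrecyRate hSR hSE hQ₀ (Q - Q₀))
  rw [Matrix.mul_sub, trace_sub, Complex.sub_re] at h
  linarith

end

lemma lamMax_eq_of_posSemidef_smul_one_sub {m : ℕ} {A : Matrix (Fin m) (Fin m) ℂ} {μ : ℝ}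
    (hA : ((μ : ℂ) • 1 - A).PosSemidef) (hdet : ((μ : ℂ) • 1 - A).det = 0) : lamMax A = μ := by
  have hub : ∀ t ∈ {t : ℝ | ∃ v : Fin m → ℂ, v ≠ 0 ∧ A *ᵥ v = (t : ℂ) • v}, t ≤ μ := by
    rintro t ⟨w, hw, hAw⟩
    have h := hA.dotProduct_mulVec_nonneg w
    rw [sub_mulVec, smul_mulVec, one_mulVec, hAw, ← sub_smul, dotProduct_smul, smul_eq_mul,
      ← Complex.ofReal_sub] at h
    have hre := (Complex.nonneg_iff.mp h).1
    rw [Complex.re_ofReal_mul] at hre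
    exact sub_nonneg.mp (nonneg_of_mul_nonneg_left hre
      (Complex.pos_iff.mp (dotProduct_star_self_pos_iff.mpr hw)).1)
  have hmem : μ ∈ {t : ℝ | ∃ v : Fin m → ℂ, v ≠ 0 ∧ A *ᵥ v = (t : ℂ) • v} := by
    obtain ⟨v, hv, hAv⟩ := exists_mulVec_eq_zero_iff.mpr hdet
    refine ⟨v, hv, ?_⟩
    rwa [sub_mulVec, smul_mulVec, one_mulVec, sub_eq_zero, eq_comm] at hAv
  exact le_antisymm (csSup_le ⟨μ, hmem⟩ hub) (le_csSup ⟨μ, hub⟩ hmem)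

theorem stmt_9_general (nT nR nE : ℕ) (HR : Matrix (Fin nR) (Fin nT) ℂ)
    (HE : Matrix (Fin nE) (Fin nT) ℂ) (ρ : ℝ) (hρ : 0 < ρ)
    (SR SE Θ : Matrix (Fin nT) (Fin nT) ℂ)
    (hSR : SR = (ρ : ℂ) • (HRᴴ * HR)) (hSE : SE = (ρ : ℂ) • (HEᴴ * HE))
    (Qo : Matrix (Fin nT) (Fin nT) ℂ) (hQo : Qo.PosSemidef) (htr : Qo.trace = 1)
    (hΘ : Θ = SR * (1 + Qo * SR)⁻¹ - SE * (1 + Qo * SE)⁻¹)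
    (hmax : ∀ Q : Matrix (Fin nT) (Fin nT) ℂ, Q.PosSemidef → Q.trace = 1 →
      Real.log ((1 + (ρ : ℂ) • (HR * Q * HRᴴ)).det.re)
          - Real.log ((1 + (ρ : ℂ) • (HE * Q * HEᴴ)).det.re)
        ≤ Real.log ((1 + (ρ : ℂ) • (HR * Qo * HRᴴ)).det.re)
          - Real.log ((1 + (ρ : ℂ) • (HE * Qo * HEᴴ)).det.re)) :
    Qo * Θ = (Qo * Θ).trace • Qo ∧ lamMax Θ = (Qo * Θ).trace.re := by
  have hρ' : 0 ≤ (ρ : ℂ) := Complex.zero_le_real.mpr hρ.le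
  have hSRpsd : SR.PosSemidef := hSR ▸ (posSemidef_conjTranspose_mul_self HR).smul hρ'
  have hSEpsd : SE.PosSemidef := hSE ▸ (posSemidef_conjTranspose_mul_self HE).smul hρ'
  have hopt : ∀ Q : Matrix (Fin nT) (Fin nT) ℂ, Q.PosSemidef → Q.trace = 1 →
      secrecyRate SR SE Q ≤ secrecyRate SR SE Qo := fun Q hQ hQtr => by
    simpa only [secrecyRate, hSR, hSE, det_one_add_smul_mul_mul_comm] using hmax Q hQ hQtr
  obtain rfl : Θ = secrecyGradient SR SE Qo := hΘ
  set μ := (Qo * secrecyGradient SR SE Qo).trace.re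
  have hμ : (μ : ℂ) = (Qo * secrecyGradient SR SE Qo).trace :=
    hQo.isHermitian.ofReal_re_trace_mul (isHermitian_secrecyGradient hSRpsd hSEpsd hQo)
  have hgap : ((μ : ℂ) • 1 - secrecyGradient SR SE Qo).PosSemidef :=
    posSemidef_smul_one_sub_of_re_trace_mul_le (isHermitian_secrecyGradient hSRpsd hSEpsd hQo)
      fun Q hQ hQtr => by
        simpa only [trace_mul_comm _ Qo] using
          re_trace_secrecyGradient_mul_le hSRpsd hSEpsd hQo htr hopt hQ hQtr
  have hker : Qo * ((μ : ℂ) • 1 - secrecyGradient SR SE Qo) = 0 :=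
    hQo.mul_eq_zero_of_trace_mul_eq_zero hgap (by
      rw [Matrix.mul_sub, trace_sub, Matrix.mul_smul, Matrix.mul_one, trace_smul, htr, hμ,
        smul_eq_mul, mul_one, sub_self])
  refine ⟨?_, lamMax_eq_of_posSemidef_smul_one_sub hgap ?_⟩
  · rw [Matrix.mul_sub, Matrix.mul_smul, Matrix.mul_one, sub_eq_zero, hμ] at hker
    exact hker.symm
  · by_contra hdet
    have hQo0 : Qo = 0 := ((isUnit_iff_isUnit_det _).mpr (Ne.isUnit hdet)).mul_left_eq_zero.mp hker
    simp [hQo0] at htr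

/-- If `H_R†H_R − H_E†H_E` has a positive eigenvalue and `Q°` is a
global maximizer of the secrecy rate over `Ω`, then `Q°` satisfies
`Q° Θ(Q°) = Tr(Q° Θ(Q°)) Q°` and `λ_max(Θ(Q°)) = Tr(Q° Θ(Q°))`, where
`S_R = ρ H_R†H_R`, `S_E = ρ H_E†H_E`, `Θ(Q) = S_R(I+QS_R)⁻¹ − S_E(I+QS_E)⁻¹`. -/
theorem stmt_9 (nT nR nE : ℕ) (HR : Matrix (Fin nR) (Fin nT) ℂ)
    (HE : Matrix (Fin nE) (Fin nT) ℂ) (ρ : ℝ) (hρ : 0 < ρ)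
    (hpos : ∃ (t : ℝ) (v : Fin nT → ℂ), 0 < t ∧ v ≠ 0 ∧
      (HRᴴ * HR - HEᴴ * HE) *ᵥ v = (t : ℂ) • v)
    (SR SE Θ : Matrix (Fin nT) (Fin nT) ℂ)
    (hSR : SR = (ρ : ℂ) • (HRᴴ * HR)) (hSE : SE = (ρ : ℂ) • (HEᴴ * HE))
    (Qo : Matrix (Fin nT) (Fin nT) ℂ) (hQo : Qo.PosSemidef) (htr : Qo.trace = 1)
    (hΘ : Θ = SR * (1 + Qo * SR)⁻¹ - SE * (1 + Qo * SE)⁻¹)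
    (hmax : ∀ Q : Matrix (Fin nT) (Fin nT) ℂ, Q.PosSemidef → Q.trace = 1 →
      Real.log ((1 + (ρ : ℂ) • (HR * Q * HRᴴ)).det.re)
          - Real.log ((1 + (ρ : ℂ) • (HE * Q * HEᴴ)).det.re)
        ≤ Real.log ((1 + (ρ : ℂ) • (HR * Qo * HRᴴ)).det.re)
          - Real.log ((1 + (ρ : ℂ) • (HE * Qo * HEᴴ)).det.re)) :
    Qo * Θ = (Qo * Θ).trace • Qo ∧ lamMax Θ = (Qo * Θ).trace.re :=
  stmt_9_general nT nR nE HR HE ρ hρ SR SE Θ hSR hSE Qo hQo htr hΘ hmax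
end

section
/- Consider the MISO wiretap channel (n_R = n_E = 1) with nonzero h_R, h_E ∈ ℂ^{n_T}, and assume h_R h_R† − h_E h_E† has a positive eigenvalue. Set S_R = ρ h_R h_R†, S_E = ρ h_E h_E†, and Θ(Q) = S_R(I + Q S_R)⁻¹ − S_E(I + Q S_E)⁻¹. If Q ∈ Ω satisfies Q Θ(Q) = Tr(Q Θ(Q)) · Q and λ_max(Θ(Q)) = Tr(Q Θ(Q)), then Q is a global maximizer of the secrecy rate: C_s(Q) ≥ C_s(Q') for all Q' ∈ Ω. -/
open Matrix
open scoped ComplexOrder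

namespace Matrix

variable {n : Type*} [Fintype n]

theorem vecMulVec_mul_mul_vecMulVec {R : Type*} [CommSemiring R] (u v w x : n → R)
    (M : Matrix n n R) :
    vecMulVec u v * M * vecMulVec w x = (v ⬝ᵥ M *ᵥ w) • vecMulVec u x := by
  rw [vecMulVec_mul, vecMulVec_mul_vecMulVec, dotProduct_mulVec, vecMulVec_smul]

theorem trace_mul_vecMulVec {R : Type*} [CommSemiring R] (M : Matrix n n R) (u v : n → R) :
    (M * vecMulVec u v).trace = v ⬝ᵥ M *ᵥ u := by
  rw [mul_vecMulVec, trace_vecMulVec, dotProduct_comm]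

theorem PosSemidef.trace_mul_nonneg {𝕜 : Type*} [RCLike 𝕜] {A B : Matrix n n 𝕜}
    (hA : A.PosSemidef) (hB : B.PosSemidef) : 0 ≤ (A * B).trace := by
  obtain ⟨m, v, rfl⟩ := posSemidef_iff_eq_sum_vecMulVec.mp hB
  rw [Matrix.mul_sum, trace_sum]
  exact Finset.sum_nonneg fun k _ => trace_mul_vecMulVec A _ _ ▸ hA.dotProduct_mulVec_nonneg _

theorem PosSemidef.dotProduct_mulVec_eq_ofReal_re {Q : Matrix n n ℂ} (hQ : Q.PosSemidef)
    (h : n → ℂ) : star h ⬝ᵥ Q *ᵥ h = ((star h ⬝ᵥ Q *ᵥ h).re : ℂ) :=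
  Complex.eq_re_of_ofReal_le (by exact_mod_cast hQ.dotProduct_mulVec_nonneg h)

theorem isHermitian_ofReal_smul_vecMulVec_sub (x y : ℝ) (u w : n → ℂ) :
    ((x : ℂ) • vecMulVec u (star u) - (y : ℂ) • vecMulVec w (star w)).IsHermitian :=
  ((posSemidef_vecMulVec_self_star u).isHermitian.smul (Complex.conj_ofReal x)).sub
    ((posSemidef_vecMulVec_self_star w).isHermitian.smul (Complex.conj_ofReal y))

theorem re_trace_mul_ofReal_smul_vecMulVec_sub (P : Matrix n n ℂ)
    (x y : ℝ) (u w : n → ℂ) :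
    (P * ((x : ℂ) • vecMulVec u (star u) - (y : ℂ) • vecMulVec w (star w))).trace.re
      = x * (star u ⬝ᵥ P *ᵥ u).re - y * (star w ⬝ᵥ P *ᵥ w).re := by
  rw [mul_sub, Matrix.mul_smul, Matrix.mul_smul, trace_sub, trace_smul, trace_smul,
    trace_mul_vecMulVec, trace_mul_vecMulVec, smul_eq_mul, smul_eq_mul, Complex.sub_re,
    Complex.re_ofReal_mul, Complex.re_ofReal_mul]

variable [DecidableEq n]

theorem mul_inv_one_add_mul_of_mul_mul_eq_smul {K : Type*} [Field K] {S Q : Matrix n n K}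
    {a : K} (ha : a ≠ 0) (hS : S * Q * S = (a - 1) • S) :
    S * (1 + Q * S)⁻¹ = a⁻¹ • S := by
  have hQS : Q * S * (Q * S) = (a - 1) • (Q * S) := by
    rw [Matrix.mul_assoc, ← Matrix.mul_assoc S, hS, Matrix.mul_smul]
  have hinv : (1 + Q * S) * (1 - a⁻¹ • (Q * S)) = 1 := by
    simp only [add_mul, mul_sub, one_mul, mul_one, Matrix.mul_smul, hQS]
    match_scalars
    · rfl
    · field_simp
      ring
  rw [Matrix.inv_eq_right_inv hinv, mul_sub, mul_one, Matrix.mul_smul, ← Matrix.mul_assoc, hS]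
  match_scalars
  field_simp
  ring

theorem smul_vecMulVec_mul_inv_one_add_mul {K : Type*} [Field K] (c : K) (u v : n → K)
    (Q : Matrix n n K) (ha : 1 + c * (v ⬝ᵥ Q *ᵥ u) ≠ 0) :
    c • vecMulVec u v * (1 + Q * (c • vecMulVec u v))⁻¹
      = (c / (1 + c * (v ⬝ᵥ Q *ᵥ u))) • vecMulVec u v := by
  rw [mul_inv_one_add_mul_of_mul_mul_eq_smul ha, smul_smul, div_eq_inv_mul]
  rw [Matrix.smul_mul, Matrix.mul_smul, Matrix.smul_mul, vecMulVec_mul_mul_vecMulVec, smul_smul,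
    smul_smul]
  match_scalars
  ring

theorem mem_spectrum_iff_exists_mulVec_eq_smul {K : Type*} [Field K] (A : Matrix n n K)
    (μ : K) : μ ∈ spectrum K A ↔ ∃ v ≠ 0, A *ᵥ v = μ • v := by
  rw [← spectrum_toLin', ← Module.End.hasEigenvalue_iff_mem_spectrum]
  simp only [Module.End.hasEigenvalue_iff, Submodule.ne_bot_iff, Module.End.mem_eigenspace_iff,
    toLin'_apply]
  exact exists_congr fun v => and_comm

open scoped MatrixOrder in
theorem IsHermitian.posSemidef_smul_one_sub_of_spectrum_le {A : Matrix n n ℂ}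
    (hA : A.IsHermitian) {μ : ℝ} (h : ∀ x ∈ spectrum ℝ A, x ≤ μ) :
    ((μ : ℂ) • (1 : Matrix n n ℂ) - A).PosSemidef := by
  have hle := le_algebraMap_of_spectrum_le h hA.isSelfAdjoint
  rwa [Matrix.le_iff, Algebra.algebraMap_eq_smul_one, ← Complex.coe_smul] at hle

theorem PosSemidef.ofReal_smul_vecMulVec_mul_inv_one_add_mul {Q : Matrix n n ℂ}
    (hQ : Q.PosSemidef) {c : ℝ} (hc : 0 ≤ c) (h : n → ℂ) :
    (c : ℂ) • vecMulVec h (star h) * (1 + Q * ((c : ℂ) • vecMulVec h (star h)))⁻¹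
      = ((c / (1 + c * (star h ⬝ᵥ Q *ᵥ h).re) : ℝ) : ℂ) • vecMulVec h (star h) := by
  have hpos : 0 < 1 + c * (star h ⬝ᵥ Q *ᵥ h).re := by
    have := hQ.re_dotProduct_nonneg h
    positivity
  rw [smul_vecMulVec_mul_inv_one_add_mul, hQ.dotProduct_mulVec_eq_ofReal_re]
  · push_cast
    rfl
  · rw [hQ.dotProduct_mulVec_eq_ofReal_re]
    exact_mod_cast hpos.ne'

end Matrix

theorem lamMax_eq_sSup_spectrum {n : ℕ} (A : Matrix (Fin n) (Fin n) ℂ) :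
    lamMax A = sSup (spectrum ℝ A) := by
  unfold lamMax
  congr 1
  ext t
  rw [← spectrum.algebraMap_mem_iff ℂ, mem_spectrum_iff_exists_mulVec_eq_smul]
  rfl

theorem le_lamMax_of_mem_spectrum {n : ℕ} {A : Matrix (Fin n) (Fin n) ℂ} {t : ℝ}
    (ht : t ∈ spectrum ℝ A) : t ≤ lamMax A :=
  lamMax_eq_sSup_spectrum A ▸ le_csSup A.finite_real_spectrum.bddAbove ht

theorem re_trace_mul_le_lamMax {n : ℕ} {A P : Matrix (Fin n) (Fin n) ℂ} (hA : A.IsHermitian)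
    (hP : P.PosSemidef) (htr : P.trace = 1) : (P * A).trace.re ≤ lamMax A := by
  have h := hP.trace_mul_nonneg
    (hA.posSemidef_smul_one_sub_of_spectrum_le fun _ => le_lamMax_of_mem_spectrum)
  rw [mul_sub, Matrix.mul_smul, mul_one, trace_sub, trace_smul, htr, smul_eq_mul, mul_one] at h
  simpa using (Complex.le_def.mp h).1

theorem Real.log_sub_log_le_log_sub_log_of_div_le_div {a b x y : ℝ} (ha : 0 < a) (hb : 0 < b)
    (hx : 0 < x) (hy : 0 < y) (h : x / a ≤ y / b) :
    Real.log x - Real.log y ≤ Real.log a - Real.log b := by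
  rw [← Real.log_div hx.ne' hy.ne', ← Real.log_div ha.ne' hb.ne']
  refine Real.log_le_log (div_pos hx hy) ?_
  rw [div_le_div_iff₀ ha hb] at h
  rw [div_le_div_iff₀ hy hb]
  linarith

theorem Real.log_one_add_mul_sub_le_of_linearized_le {ρ α β γ δ : ℝ} (hρ : 0 ≤ ρ)
    (hα : 0 ≤ α) (hβ : 0 ≤ β) (hγ : 0 ≤ γ) (hδ : 0 ≤ δ)
    (h : ρ / (1 + ρ * α) * γ - ρ / (1 + ρ * β) * δ
      ≤ ρ / (1 + ρ * α) * α - ρ / (1 + ρ * β) * β) :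
    Real.log (1 + ρ * γ) - Real.log (1 + ρ * δ)
      ≤ Real.log (1 + ρ * α) - Real.log (1 + ρ * β) := by
  have ha : 0 < 1 + ρ * α := by positivity
  have hb : 0 < 1 + ρ * β := by positivity
  refine Real.log_sub_log_le_log_sub_log_of_div_le_div ha hb (by positivity) (by positivity) ?_
  -- `ρα / (1 + ρα) = 1 - 1 / (1 + ρα)`, so `h` says `(1 + ργ) / (1 + ρα) ≤ (1 + ρδ) / (1 + ρβ)`.
  have hsplit : ∀ c x : ℝ, (1 + ρ * x) / c = 1 / c + ρ / c * x := fun c x => by ring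
  have hαα : 1 / (1 + ρ * α) + ρ / (1 + ρ * α) * α = 1 :=
    (hsplit _ α).symm.trans (div_self ha.ne')
  have hββ : 1 / (1 + ρ * β) + ρ / (1 + ρ * β) * β = 1 :=
    (hsplit _ β).symm.trans (div_self hb.ne')
  rw [hsplit, hsplit]
  linarith

theorem stmt_10_general (nT : ℕ) (hR hE : Fin nT → ℂ)
    (ρ : ℝ) (hρ : 0 < ρ)
    (SR SE Θ : Matrix (Fin nT) (Fin nT) ℂ)
    (hSR : SR = (ρ : ℂ) • vecMulVec hR (star hR))
    (hSE : SE = (ρ : ℂ) • vecMulVec hE (star hE))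
    (Q : Matrix (Fin nT) (Fin nT) ℂ) (hQ : Q.PosSemidef)
    (hΘ : Θ = SR * (1 + Q * SR)⁻¹ - SE * (1 + Q * SE)⁻¹)
    (heq2 : lamMax Θ = (Q * Θ).trace.re) :
    ∀ Q' : Matrix (Fin nT) (Fin nT) ℂ, Q'.PosSemidef → Q'.trace = 1 →
      Real.log (1 + ρ * (star hR ⬝ᵥ (Q' *ᵥ hR)).re)
          - Real.log (1 + ρ * (star hE ⬝ᵥ (Q' *ᵥ hE)).re)
        ≤ Real.log (1 + ρ * (star hR ⬝ᵥ (Q *ᵥ hR)).re)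
          - Real.log (1 + ρ * (star hE ⬝ᵥ (Q *ᵥ hE)).re) := by
  intro Q' hQ' htr'
  have hΘ' : Θ =
      ((ρ / (1 + ρ * (star hR ⬝ᵥ (Q *ᵥ hR)).re) : ℝ) : ℂ) • vecMulVec hR (star hR)
        - ((ρ / (1 + ρ * (star hE ⬝ᵥ (Q *ᵥ hE)).re) : ℝ) : ℂ) • vecMulVec hE (star hE) := by
    rw [hΘ, hSR, hSE, hQ.ofReal_smul_vecMulVec_mul_inv_one_add_mul hρ.le,
      hQ.ofReal_smul_vecMulVec_mul_inv_one_add_mul hρ.le]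
  have hle :=
    re_trace_mul_le_lamMax (hΘ' ▸ isHermitian_ofReal_smul_vecMulVec_sub _ _ _ _) hQ' htr'
  rw [heq2, hΘ', re_trace_mul_ofReal_smul_vecMulVec_sub, re_trace_mul_ofReal_smul_vecMulVec_sub]
    at hle
  exact Real.log_one_add_mul_sub_le_of_linearized_le hρ.le (hQ.re_dotProduct_nonneg hR)
    (hQ.re_dotProduct_nonneg hE) (hQ'.re_dotProduct_nonneg hR) (hQ'.re_dotProduct_nonneg hE) hle

/-- In the MISO wiretap channel with `h_R h_R† − h_E h_E†` having
a positive eigenvalue, if `Q ∈ Ω` satisfies `Q Θ(Q) = Tr(Q Θ(Q)) Q` and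
`λ_max(Θ(Q)) = Tr(Q Θ(Q))`, where `S_R = ρ h_R h_R†`, `S_E = ρ h_E h_E†` and
`Θ(Q) = S_R(I+QS_R)⁻¹ − S_E(I+QS_E)⁻¹`, then `Q` is a global maximizer of the
secrecy rate over `Ω`. -/
theorem stmt_10 (nT : ℕ) (hR hE : Fin nT → ℂ) (hRne : hR ≠ 0) (hEne : hE ≠ 0)
    (ρ : ℝ) (hρ : 0 < ρ)
    (hpos : ∃ (t : ℝ) (v : Fin nT → ℂ), 0 < t ∧ v ≠ 0 ∧
      (vecMulVec hR (star hR) - vecMulVec hE (star hE)) *ᵥ v = (t : ℂ) • v)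
    (SR SE Θ : Matrix (Fin nT) (Fin nT) ℂ)
    (hSR : SR = (ρ : ℂ) • vecMulVec hR (star hR))
    (hSE : SE = (ρ : ℂ) • vecMulVec hE (star hE))
    (Q : Matrix (Fin nT) (Fin nT) ℂ) (hQ : Q.PosSemidef) (htr : Q.trace = 1)
    (hΘ : Θ = SR * (1 + Q * SR)⁻¹ - SE * (1 + Q * SE)⁻¹)
    (heq1 : Q * Θ = (Q * Θ).trace • Q)
    (heq2 : lamMax Θ = (Q * Θ).trace.re) :
    ∀ Q' : Matrix (Fin nT) (Fin nT) ℂ, Q'.PosSemidef → Q'.trace = 1 →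
      Real.log (1 + ρ * (star hR ⬝ᵥ (Q' *ᵥ hR)).re)
          - Real.log (1 + ρ * (star hE ⬝ᵥ (Q' *ᵥ hE)).re)
        ≤ Real.log (1 + ρ * (star hR ⬝ᵥ (Q *ᵥ hR)).re)
          - Real.log (1 + ρ * (star hE ⬝ᵥ (Q *ᵥ hE)).re) :=
  stmt_10_general nT hR hE ρ hρ SR SE Θ hSR hSE Q hQ hΘ heq2
end
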